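/- arXiv:1410.4965 — 4 statements merged into one kernel-verified Lean document; each statement's English description precedes it below -/
import Mathlib

section
/- Fix a > 0 and α ∈ (0,1). The function Φ_{a,α}(t) = exp(-a·(-t)^α), defined for t < 0, has all derivatives nonnegative on (-∞,0), i.e. Φ_{a,α} is absolutely monotonic on the negative half-axis. -/
/-!
Write `Φ = exp ∘ g` with `g s = -a (-s)^α`. Then `Φ' = g' Φ` where `g' s = a α (-s)^(α-1)`, and
`g'` is absolutely monotonic on `(-∞, 0)`: its `k`-th derivative is
`a α (1-α)(2-α)⋯(k-α) (-s)^(α-1-k) ≥ 0`. By the Leibniz rule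
`Φ^(n+1) = ∑ C(n,i) g'^(i) Φ^(n-i)`, so nonnegativity of all derivatives of `Φ` follows by strong
induction on `n`.
-/

open Set Filter Topology Polynomial Real
open scoped ContDiff

theorem ascPochhammer_eval_nonneg {S : Type*} [Semiring S] [PartialOrder S] [IsOrderedRing S]
    {s : S} (hs : 0 ≤ s) (n : ℕ) : 0 ≤ (ascPochhammer S n).eval s := by
  induction n with
  | zero => simp
  | succ n ih =>
    rw [ascPochhammer_succ_eval]
    exact mul_nonneg ih (add_nonneg hs n.cast_nonneg)

namespace AbsolutelyMonotoneOn

variable {f g : ℝ → ℝ} {s : Set ℝ}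

theorem iff_iteratedDeriv_nonneg_of_isOpen (hs : IsOpen s) :
    AbsolutelyMonotoneOn f s ↔
      ContDiffOn ℝ ∞ f s ∧ ∀ n : ℕ, ∀ x ∈ s, 0 ≤ iteratedDeriv n f x := by
  rw [iff_iteratedDerivWithin_nonneg hs.uniqueDiffOn]
  refine and_congr_right fun _ => forall_congr' fun n => forall₂_congr fun x hx => ?_
  rw [iteratedDerivWithin_of_isOpen hs hx]

theorem iteratedDeriv_nonneg (hf : AbsolutelyMonotoneOn f s) (hs : IsOpen s) (n : ℕ) {x : ℝ}
    (hx : x ∈ s) : 0 ≤ iteratedDeriv n f x :=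
  ((iff_iteratedDeriv_nonneg_of_isOpen hs).1 hf).2 n x hx

theorem of_deriv_eq_mul (hs : IsOpen s) (hf : ContDiffOn ℝ ∞ f s)
    (hfg : EqOn (deriv f) (g * f) s) (hf₀ : ∀ x ∈ s, 0 ≤ f x) (hg : AbsolutelyMonotoneOn g s) :
    AbsolutelyMonotoneOn f s := by
  refine (iff_iteratedDeriv_nonneg_of_isOpen hs).2 ⟨hf, fun n => ?_⟩
  induction n using Nat.strong_induction_on with
  | _ n ih =>
  intro x hx
  cases n with
  | zero => simpa using hf₀ x hx
  | succ n =>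
    have hloc : deriv f =ᶠ[𝓝 x] g * f := eventuallyEq_of_mem (hs.mem_nhds hx) hfg
    rw [iteratedDeriv_succ', hloc.iteratedDeriv_eq,
      iteratedDeriv_mul ((hg.contDiffOn.contDiffAt (hs.mem_nhds hx)).of_le (mod_cast le_top))
        ((hf.contDiffAt (hs.mem_nhds hx)).of_le (mod_cast le_top))]
    refine Finset.sum_nonneg fun i _ =>
      mul_nonneg (mul_nonneg (by positivity) (hg.iteratedDeriv_nonneg hs i hx)) ?_
    exact ih (n - i) (by omega) x hx

end AbsolutelyMonotoneOn

theorem iteratedDeriv_neg_rpow_const (β t : ℝ) (k : ℕ) :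
    iteratedDeriv k (fun s : ℝ => (-s) ^ β) t =
      (-1) ^ k * (descPochhammer ℝ k).eval β * (-t) ^ (β - k) := by
  rw [iteratedDeriv_comp_neg k (fun x : ℝ => x ^ β), iteratedDeriv_eq_iterate,
    iter_deriv_rpow_const, smul_eq_mul, mul_assoc]

theorem contDiffOn_neg_rpow_const (β : ℝ) : ContDiffOn ℝ ∞ (fun s : ℝ => (-s) ^ β) (Iio 0) :=
  fun _ ht => ((contDiffAt_rpow_const_of_ne (neg_ne_zero.2 (ne_of_lt ht))).comp _
    contDiffAt_id.neg).contDiffWithinAt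

theorem hasDerivAt_neg_rpow_const (β : ℝ) {t : ℝ} (ht : t < 0) :
    HasDerivAt (fun s : ℝ => (-s) ^ β) (-(β * (-t) ^ (β - 1))) t := by
  simpa [Function.comp_def] using
    (hasDerivAt_rpow_const (Or.inl (neg_ne_zero.2 ht.ne))).comp t (hasDerivAt_neg t)

theorem absolutelyMonotoneOn_neg_rpow_const {β : ℝ} (hβ : β ≤ 0) :
    AbsolutelyMonotoneOn (fun s : ℝ => (-s) ^ β) (Iio 0) := by
  refine (AbsolutelyMonotoneOn.iff_iteratedDeriv_nonneg_of_isOpen isOpen_Iio).2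
    ⟨contDiffOn_neg_rpow_const β, fun k t ht => ?_⟩
  rw [iteratedDeriv_neg_rpow_const, ← ascPochhammer_eval_neg_eq_descPochhammer]
  exact mul_nonneg (ascPochhammer_eval_nonneg (neg_nonneg.2 hβ) k)
    (rpow_nonneg (neg_nonneg.2 (le_of_lt ht)) _)

theorem absolutelyMonotoneOn_exp_neg_mul_neg_rpow {a α : ℝ} (haα : 0 ≤ a * α) (hα : α ≤ 1) :
    AbsolutelyMonotoneOn (fun s : ℝ => exp (-a * (-s) ^ α)) (Iio 0) := by
  refine .of_deriv_eq_mul (g := fun s => a * α * (-s) ^ (α - 1)) isOpen_Iio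
    (contDiff_exp.comp_contDiffOn (contDiffOn_const.mul (contDiffOn_neg_rpow_const α)))
    (fun t ht => ?_) (fun t _ => (exp_pos _).le)
    ((absolutelyMonotoneOn_neg_rpow_const (by linarith)).smul haα)
  rw [(((hasDerivAt_neg_rpow_const α ht).const_mul (-a)).exp).deriv]
  simp only [Pi.mul_apply]
  ring

/-- For `a > 0`, `0 < α < 1`, the function `Φ(t) = exp(-a(-t)^α)` is absolutely
monotonic on `(-∞,0)`: all its derivatives are nonnegative there. -/
theorem stmt_4 (a α : ℝ) (ha : 0 < a) (hα : α ∈ Set.Ioo (0 : ℝ) 1) :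
    ∀ k : ℕ, ∀ t : ℝ, t < 0 →
      0 ≤ iteratedDeriv k (fun s : ℝ => Real.exp (-a * (-s) ^ α)) t :=
  fun k _ ht => (absolutelyMonotoneOn_exp_neg_mul_neg_rpow (mul_nonneg ha.le hα.1.le)
    hα.2.le).iteratedDeriv_nonneg isOpen_Iio k ht
end

section
/- Let (a_n) be a sequence of positive reals with Σ_n exp(-a_n·τ) < ∞ for every τ > 0, and let α ∈ (0,1). Then the function Φ(t) = Σ_n exp(-a_n·(-t)^α), defined for t < 0, is absolutely monotonic on (-∞,0): all its forward finite differences Δ_h^n Φ(t) with h > 0, t + n·h < 0, are nonnegative. -/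
/-!
Each summand `t ↦ exp (-a * (-t) ^ α)` is absolutely monotonic on `(-∞, 0)`: its derivatives
stay nonnegative combinations of the functions `exp (-a * (-t) ^ α) * (-t) ^ β` with `β ≤ 0`,
because differentiating such a function produces `a * α` times the one with exponent
`α + β - 1 ≤ 0` and `-β ≥ 0` times the one with exponent `β - 1`. A function whose successive
derivatives are all nonnegative has nonnegative forward differences (induct on the order,
using that `fwdDiff h` commutes with differentiation), and forward differences commute with the
convergent sum over the sequence.
-/

open Finset Set Function

theorem fwdDiff_iterate_nonneg_of_hasDerivAt {D : ℕ → ℝ → ℝ} {c h : ℝ} (hh : 0 ≤ h)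
    (hD : ∀ m, ∀ t < c, HasDerivAt (D m) (D (m + 1) t) t) (hD₀ : ∀ m, ∀ t < c, 0 ≤ D m t)
    (n : ℕ) {t : ℝ} (ht : t + n * h < c) : 0 ≤ (fwdDiff h)^[n] (D 0) t := by
  induction n generalizing D c t with
  | zero => simpa using hD₀ 0 t (by simpa using ht)
  | succ n ih =>
    rw [iterate_succ_apply]
    refine ih (D := fun m => fwdDiff h (D m)) (c := c - h) (fun m s hs => ?_) (fun m s hs => ?_)
      (by push_cast at ht; linarith)
    · exact ((hD m (s + h) (by linarith)).comp_add_const s h).sub (hD m s (by linarith))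
    · have hmono : MonotoneOn (D m) (Iio c) :=
        monotoneOn_of_hasDerivWithinAt_nonneg (convex_Iio c)
          (fun x hx => (hD m x hx).continuousAt.continuousWithinAt)
          (fun x hx => (hD m x (by rwa [interior_Iio] at hx)).hasDerivWithinAt)
          (fun x hx => hD₀ (m + 1) x (by rwa [interior_Iio] at hx))
      exact sub_nonneg.2 <| hmono (mem_Iio.2 (by linarith)) (mem_Iio.2 (by linarith))
        (by linarith)

theorem Real.fwdDiff_iterate_eq_sum (f : ℝ → ℝ) (h t : ℝ) (n : ℕ) :
    (fwdDiff h)^[n] f t =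
      ∑ k ∈ range (n + 1), (-1 : ℝ) ^ (n - k) * n.choose k * f (t + k * h) := by
  rw [fwdDiff_iter_eq_sum_shift]
  push_cast [zsmul_eq_mul, nsmul_eq_mul]
  rfl

theorem fwdDiff_iterate_tsum {ι : Type*} {f : ι → ℝ → ℝ} {h t : ℝ} {n : ℕ}
    (hf : ∀ k ≤ n, Summable fun i => f i (t + k * h)) :
    (fwdDiff h)^[n] (fun s => ∑' i, f i s) t = ∑' i, (fwdDiff h)^[n] (f i) t := by
  simp only [Real.fwdDiff_iterate_eq_sum, ← tsum_mul_left]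
  exact (Summable.tsum_finsetSum fun k hk =>
    (hf k (Nat.lt_succ_iff.1 (mem_range.1 hk))).mul_left _).symm

section ExpRpow

variable (a α : ℝ)

noncomputable def expRpowMonomial (β s : ℝ) : ℝ := Real.exp (-a * (-s) ^ α) * (-s) ^ β

noncomputable def expRpowPoly (l : List (ℝ × ℝ)) (s : ℝ) : ℝ :=
  (l.map fun p => p.1 * expRpowMonomial a α p.2 s).sum

def expRpowPolyDeriv (l : List (ℝ × ℝ)) : List (ℝ × ℝ) :=
  l.flatMap fun p => [(a * α * p.1, α + p.2 - 1), (-p.2 * p.1, p.2 - 1)]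

variable {a α}

theorem hasDerivAt_expRpowMonomial (β : ℝ) {t : ℝ} (ht : t < 0) :
    HasDerivAt (expRpowMonomial a α β)
      (a * α * expRpowMonomial a α (α + β - 1) t - β * expRpowMonomial a α (β - 1) t) t := by
  have hne : -t ≠ 0 := by linarith
  have hneg : HasDerivAt (fun s : ℝ => -s) (-1) t := (hasDerivAt_id t).neg
  have hexp := ((hneg.rpow_const (p := α) (Or.inl hne)).const_mul (-a)).exp
  refine (hexp.mul (hneg.rpow_const (p := β) (Or.inl hne))).congr_deriv ?_
  simp only [expRpowMonomial]
  rw [show α + β - 1 = (α - 1) + β by ring, Real.rpow_add (by linarith)]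
  ring

theorem hasDerivAt_expRpowPoly (l : List (ℝ × ℝ)) {t : ℝ} (ht : t < 0) :
    HasDerivAt (expRpowPoly a α l) (expRpowPoly a α (expRpowPolyDeriv a α l) t) t := by
  induction l with
  | nil => exact hasDerivAt_const t (0 : ℝ)
  | cons p l ih =>
    refine (((hasDerivAt_expRpowMonomial p.2 ht).const_mul p.1).add ih).congr_deriv ?_
    simp only [expRpowPoly, expRpowPolyDeriv, List.flatMap_cons, List.map_append,
      List.sum_append, List.map_cons, List.sum_cons, List.map_nil, List.sum_nil]
    ring

theorem expRpowPoly_nonneg {l : List (ℝ × ℝ)} (hl : ∀ p ∈ l, 0 ≤ p.1) {t : ℝ} (ht : t < 0) :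
    0 ≤ expRpowPoly a α l t :=
  List.sum_nonneg fun x hx => by
    obtain ⟨p, hp, rfl⟩ := List.mem_map.1 hx
    exact mul_nonneg (hl p hp)
      (mul_nonneg (Real.exp_nonneg _) (Real.rpow_nonneg (by linarith) _))

theorem expRpowPolyDeriv_nonneg (ha : 0 ≤ a) (hα : α ∈ Icc (0 : ℝ) 1) {l : List (ℝ × ℝ)}
    (hl : ∀ p ∈ l, 0 ≤ p.1 ∧ p.2 ≤ 0) : ∀ p ∈ expRpowPolyDeriv a α l, 0 ≤ p.1 ∧ p.2 ≤ 0 := by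
  intro q hq
  obtain ⟨p, hp, hq⟩ := List.mem_flatMap.1 hq
  obtain ⟨hc, hβ⟩ := hl p hp
  simp only [List.mem_cons, List.not_mem_nil, or_false] at hq
  rcases hq with rfl | rfl
  · exact ⟨by have := hα.1; positivity, by linarith [hα.2]⟩
  · exact ⟨mul_nonneg (neg_nonneg.2 hβ) hc, by linarith⟩

theorem fwdDiff_iterate_exp_neg_mul_rpow_nonneg (ha : 0 ≤ a) (hα : α ∈ Icc (0 : ℝ) 1)
    {h : ℝ} (hh : 0 ≤ h) (n : ℕ) {t : ℝ} (ht : t + n * h < 0) :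
    0 ≤ (fwdDiff h)^[n] (fun s => Real.exp (-a * (-s) ^ α)) t := by
  set L : ℕ → List (ℝ × ℝ) := fun m => (expRpowPolyDeriv a α)^[m] [(1, 0)]
  have hL : ∀ m, ∀ p ∈ L m, 0 ≤ p.1 ∧ p.2 ≤ 0 := by
    intro m
    induction m with
    | zero => simp [L]
    | succ m ih =>
      simpa only [L, iterate_succ_apply'] using expRpowPolyDeriv_nonneg ha hα ih
  have hL₀ : expRpowPoly a α (L 0) = fun s => Real.exp (-a * (-s) ^ α) := by
    funext s; simp [L, expRpowPoly, expRpowMonomial]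
  rw [← hL₀]
  refine fwdDiff_iterate_nonneg_of_hasDerivAt (D := fun m => expRpowPoly a α (L m)) hh
    (fun m s hs => ?_) (fun m s hs => expRpowPoly_nonneg (fun p hp => (hL m p hp).1) hs) n ht
  simpa only [L, iterate_succ_apply'] using hasDerivAt_expRpowPoly (L m) hs

end ExpRpow

/-- If `a n > 0` with `∑ exp(-a n * τ) < ∞` for all `τ > 0`, and `0 < α < 1`, then
`Φ(t) = ∑ exp(-a n * (-t)^α)` is absolutely monotonic on `(-∞,0)`:
all its forward finite differences are nonnegative. -/
theorem stmt_5 (a : ℕ → ℝ) (hpos : ∀ n, 0 < a n)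
    (hsum : ∀ τ : ℝ, 0 < τ → Summable (fun n => Real.exp (-(a n) * τ)))
    (α : ℝ) (hα : α ∈ Set.Ioo (0 : ℝ) 1) :
    ∀ n : ℕ, ∀ h t : ℝ, 0 < h → t + (n : ℝ) * h < 0 →
      0 ≤ ∑ k ∈ Finset.range (n + 1),
        (-1 : ℝ) ^ (n - k) * (n.choose k : ℝ) *
          ∑' m : ℕ, Real.exp (-(a m) * (-(t + (k : ℝ) * h)) ^ α) := by
  intro n h t hh ht
  have hsummable : ∀ k ≤ n, Summable fun m => Real.exp (-(a m) * (-(t + k * h)) ^ α) := by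
    intro k hk
    have : (k : ℝ) * h ≤ n * h := by gcongr
    exact hsum _ (Real.rpow_pos_of_pos (by linarith) α)
  rw [← Real.fwdDiff_iterate_eq_sum (fun s => ∑' m, Real.exp (-(a m) * (-s) ^ α)),
    fwdDiff_iterate_tsum (f := fun m s => Real.exp (-(a m) * (-s) ^ α)) hsummable]
  exact tsum_nonneg fun m =>
    fwdDiff_iterate_exp_neg_mul_rpow_nonneg (hpos m).le (Ioo_subset_Icc_self hα) hh.le n ht
end

section
/- Let α ∈ (0,1) and a > 0. For every n ∈ ℕ, h > 0, and t < -n·h, the n-th finite difference Σ_{k=0}^{n} (-1)^{n-k} (n choose k) exp(-a·(-(t+kh))^α) is nonnegative. -/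
/-!
The nonnegative combinations of the functions `t ↦ exp (-a (-t) ^ α) (-t) ^ e` with `e ≤ 0`
are nonnegative on `t < 0` and form a class closed under differentiation there, because
`α ≤ 1` keeps the exponents `e + α - 1` and `e - 1` of the derivative nonpositive. For any such
class, induction on `n` gives `Δₕⁿ f ≥ 0`: the derivative of `Δₕⁿ f` is
`Δₕⁿ f'`, which is nonnegative by induction, so `Δₕⁿ f` is monotone and
`Δₕⁿ⁺¹ f t = Δₕⁿ f (t + h) - Δₕⁿ f t ≥ 0`.
-/

open Real Set Finset fwdDiff

theorem hasDerivAt_fwdDiff_iter {f g : ℝ → ℝ} {h s : ℝ} {n : ℕ}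
    (hfg : ∀ k ≤ n, HasDerivAt f (g (s + k * h)) (s + k * h)) :
    HasDerivAt (Δ_[h] ^[n] f) (Δ_[h] ^[n] g s) s := by
  rw [funext (fwdDiff_iter_eq_sum_shift h f n), fwdDiff_iter_eq_sum_shift]
  simp only [nsmul_eq_mul]
  exact HasDerivAt.fun_sum fun k hk ↦
    ((hfg k (Nat.lt_succ_iff.mp (Finset.mem_range.mp hk))).comp_add_const s _).fun_const_smul _

theorem fwdDiff_iter_nonneg_of_forall_hasDerivAt_mem {I : Set ℝ} (hI : Convex ℝ I)
    {S : Set (ℝ → ℝ)} (hS_nonneg : ∀ f ∈ S, ∀ x ∈ I, 0 ≤ f x)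
    (hS_deriv : ∀ f ∈ S, ∃ g ∈ S, ∀ x ∈ I, HasDerivAt f (g x) x) (n : ℕ) :
    ∀ f ∈ S, ∀ {h t : ℝ}, 0 ≤ h → t ∈ I → t + n * h ∈ I → 0 ≤ Δ_[h] ^[n] f t := by
  induction n with
  | zero =>
    intro f hf h t _ ht _
    exact hS_nonneg f hf t ht
  | succ n ih =>
    intro f hf h t hh ht htn
    obtain ⟨g, hg, hfg⟩ := hS_deriv f hf
    have hmem : ∀ s ∈ Icc t (t + h), ∀ k ≤ n, s + k * h ∈ I := by
      intro s ⟨hts, hst⟩ k hk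
      have hk' : (k : ℝ) ≤ n := by exact_mod_cast hk
      push_cast at htn
      refine hI.segment_subset ht htn ?_
      rw [segment_eq_Icc (by nlinarith)]
      constructor <;> nlinarith
    have hderiv : ∀ s ∈ Icc t (t + h), HasDerivAt (Δ_[h] ^[n] f) (Δ_[h] ^[n] g s) s :=
      fun s hs ↦ hasDerivAt_fwdDiff_iter fun k hk ↦ hfg _ (hmem s hs k hk)
    have hmono : MonotoneOn (Δ_[h] ^[n] f) (Icc t (t + h)) := by
      refine monotoneOn_of_hasDerivWithinAt_nonneg (convex_Icc t (t + h))
        (fun s hs ↦ (hderiv s hs).continuousAt.continuousWithinAt)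
        (fun s hs ↦ (hderiv s (interior_subset hs)).hasDerivWithinAt) fun s hs ↦ ?_
      have hs := interior_subset hs
      exact ih g hg hh (by simpa using hmem s hs 0 n.zero_le) (hmem s hs n le_rfl)
    rw [Function.iterate_succ_apply', fwdDiff, sub_nonneg]
    exact hmono (left_mem_Icc.mpr (by linarith)) (right_mem_Icc.mpr (by linarith))
      (by linarith)

noncomputable def stretchedExpTerm (a α c e : ℝ) (t : ℝ) : ℝ :=
  c * exp (-a * (-t) ^ α) * (-t) ^ e

theorem stretchedExpTerm_nonneg {a α c e t : ℝ} (hc : 0 ≤ c) (ht : t < 0) :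
    0 ≤ stretchedExpTerm a α c e t :=
  mul_nonneg (mul_nonneg hc (exp_nonneg _)) (rpow_nonneg (by linarith) _)

theorem hasDerivAt_stretchedExpTerm (a α c e : ℝ) {t : ℝ} (ht : t < 0) :
    HasDerivAt (stretchedExpTerm a α c e)
      (stretchedExpTerm a α (c * a * α) (e + α - 1) t + stretchedExpTerm a α (c * -e) (e - 1) t)
      t := by
  have hx : 0 < -t := neg_pos.mpr ht
  have hpow (p : ℝ) : HasDerivAt (fun y : ℝ ↦ (-y) ^ p) (-1 * p * (-t) ^ (p - 1)) t :=
    (hasDerivAt_neg t).rpow_const (Or.inl hx.ne')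
  refine ((((hpow α).const_mul (-a)).exp.const_mul c).fun_mul (hpow e)).congr_deriv ?_
  simp only [stretchedExpTerm, rpow_sub hx, rpow_add hx, rpow_one]
  field_simp

def stretchedExpCone (a α : ℝ) : AddSubmonoid (ℝ → ℝ) :=
  AddSubmonoid.closure {f | ∃ c e, 0 ≤ c ∧ e ≤ 0 ∧ f = stretchedExpTerm a α c e}

theorem nonneg_of_mem_stretchedExpCone {a α : ℝ} {f : ℝ → ℝ} (hf : f ∈ stretchedExpCone a α)
    {t : ℝ} (ht : t < 0) : 0 ≤ f t := by
  induction hf using AddSubmonoid.closure_induction with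
  | mem f hf =>
    obtain ⟨c, e, hc, -, rfl⟩ := hf
    exact stretchedExpTerm_nonneg hc ht
  | zero => exact le_rfl
  | add f g _ _ hf hg => exact add_nonneg hf hg

theorem exists_hasDerivAt_mem_stretchedExpCone {a α : ℝ} (ha : 0 ≤ a) (hα₀ : 0 ≤ α)
    (hα₁ : α ≤ 1) {f : ℝ → ℝ} (hf : f ∈ stretchedExpCone a α) :
    ∃ g ∈ stretchedExpCone a α, ∀ t < 0, HasDerivAt f (g t) t := by
  induction hf using AddSubmonoid.closure_induction with
  | mem f hf =>
    obtain ⟨c, e, hc, he, rfl⟩ := hf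
    refine ⟨stretchedExpTerm a α (c * a * α) (e + α - 1) + stretchedExpTerm a α (c * -e) (e - 1),
      add_mem (AddSubmonoid.subset_closure ⟨_, _, by positivity, by linarith, rfl⟩)
        (AddSubmonoid.subset_closure ⟨_, _, mul_nonneg hc (by linarith), by linarith, rfl⟩),
      fun t ht ↦ hasDerivAt_stretchedExpTerm a α c e ht⟩
  | zero => exact ⟨0, zero_mem _, fun t _ ↦ hasDerivAt_const t (0 : ℝ)⟩
  | add f g _ _ hf hg =>
    obtain ⟨f', hf'S, hff'⟩ := hf
    obtain ⟨g', hg'S, hgg'⟩ := hg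
    exact ⟨f' + g', add_mem hf'S hg'S, fun t ht ↦ (hff' t ht).add (hgg' t ht)⟩

/-- Finite-difference form of absolute monotonicity of `t ↦ exp(-a(-t)^α)` on
`(-∞,0)` for `a > 0`, `0 < α < 1`. -/
theorem stmt_13 (a α : ℝ) (ha : 0 < a) (hα : α ∈ Set.Ioo (0 : ℝ) 1) :
    ∀ n : ℕ, ∀ h t : ℝ, 0 < h → t < -((n : ℝ) * h) →
      0 ≤ ∑ k ∈ Finset.range (n + 1),
        (-1 : ℝ) ^ (n - k) * (n.choose k : ℝ) *
          Real.exp (-a * (-(t + (k : ℝ) * h)) ^ α) := by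
  intro n h t hh ht
  have hF : stretchedExpTerm a α 1 0 ∈ stretchedExpCone a α :=
    AddSubmonoid.subset_closure ⟨1, 0, zero_le_one, le_rfl, rfl⟩
  have hΔ := fwdDiff_iter_nonneg_of_forall_hasDerivAt_mem (convex_Iio 0)
    (fun _ hf _ ↦ nonneg_of_mem_stretchedExpCone hf)
    (fun _ ↦ exists_hasDerivAt_mem_stretchedExpCone ha.le hα.1.le hα.2.le) n _ hF hh.le
    (show t < 0 by nlinarith [n.cast_nonneg (α := ℝ)]) (show t + n * h < 0 by linarith)
  simpa [fwdDiff_iter_eq_sum_shift, stretchedExpTerm, zsmul_eq_mul, nsmul_eq_mul] using hΔ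
end

section
/- If Φ : (a,b) → ℝ is infinitely differentiable with Φ^{(n)}(t) ≥ 0 for all n ≥ 0 and t ∈ (a,b), then all forward finite differences of Φ are nonnegative: Δ_h^n Φ(t) ≥ 0 for all n ∈ ℕ, h > 0, and t with a < t and t + nh < b. -/
open intervalIntegral Set

/-- Pascal-type recursion for alternating binomial sums. -/
lemma diff_sum_aux (n : ℕ) (f : ℕ → ℝ) :
    ∑ k ∈ Finset.range (n + 2), (-1:ℝ)^(n+1-k) * (((n+1).choose k : ℕ) : ℝ) * f k
      = ∑ k ∈ Finset.range (n + 1), (-1:ℝ)^(n-k) * ((n.choose k : ℕ) : ℝ) * (f (k+1) - f k) := by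
  rw [Finset.sum_range_succ']
  have h1 : ∀ k ∈ Finset.range (n+1),
      (-1:ℝ)^(n+1-(k+1)) * (((n+1).choose (k+1) : ℕ) : ℝ) * f (k+1)
        = (-1:ℝ)^(n-k) * ((n.choose k : ℕ) : ℝ) * f (k+1)
          + (-1:ℝ)^(n-k) * ((n.choose (k+1) : ℕ) : ℝ) * f (k+1) := by
    intro k _
    have : (n+1).choose (k+1) = n.choose k + n.choose (k+1) := Nat.choose_succ_succ n k
    rw [Nat.succ_sub_succ, this]
    push_cast
    ring
  rw [Finset.sum_congr rfl h1, Finset.sum_add_distrib]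
  have hB : ∑ k ∈ Finset.range (n+1), (-1:ℝ)^(n-k) * ((n.choose (k+1) : ℕ) : ℝ) * f (k+1)
      = ∑ k ∈ Finset.range n, (-1:ℝ)^(n-k) * ((n.choose (k+1) : ℕ) : ℝ) * f (k+1) := by
    rw [Finset.sum_range_succ, Nat.choose_succ_self]
    simp
  have hC : ∑ k ∈ Finset.range (n+1), (-1:ℝ)^(n-k) * ((n.choose k : ℕ) : ℝ) * f k
      = -(∑ k ∈ Finset.range n, (-1:ℝ)^(n-k) * ((n.choose (k+1) : ℕ) : ℝ) * f (k+1))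
        + (-1:ℝ)^n * f 0 := by
    rw [Finset.sum_range_succ']
    have h2 : ∀ k ∈ Finset.range n,
        (-1:ℝ)^(n-(k+1)) * ((n.choose (k+1) : ℕ) : ℝ) * f (k+1)
          = -((-1:ℝ)^(n-k) * ((n.choose (k+1) : ℕ) : ℝ) * f (k+1)) := by
      intro k hk
      have hkn : k < n := Finset.mem_range.mp hk
      have : n - k = (n - (k+1)) + 1 := by omega
      rw [this, pow_succ]
      ring
    rw [Finset.sum_congr rfl h2, ← Finset.sum_neg_distrib]
    simp
  rw [hB]
  simp only [mul_sub, Finset.sum_sub_distrib]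
  rw [hC]
  simp only [Nat.choose_zero_right, Nat.cast_one, Nat.sub_zero, pow_succ]
  ring

lemma bern (a b : ℝ) : ∀ n : ℕ, ∀ Φ : ℝ → ℝ, ContDiffOn ℝ (⊤ : ℕ∞) Φ (Set.Ioo a b) →
    (∀ m : ℕ, ∀ t ∈ Set.Ioo a b, 0 ≤ iteratedDeriv m Φ t) →
    ∀ h t : ℝ, 0 < h → a < t → t + (n : ℝ) * h < b →
      0 ≤ ∑ k ∈ Finset.range (n + 1),
        (-1 : ℝ) ^ (n - k) * (n.choose k : ℝ) * Φ (t + (k : ℝ) * h) := by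
  intro n
  induction n with
  | zero =>
    intro Φ hs hd h t hh h1 h2
    have h2' : t < b := by push_cast at h2; linarith
    have := hd 0 t ⟨h1, h2'⟩
    rw [iteratedDeriv_zero] at this
    simpa using this
  | succ n ih =>
    intro Φ hs hd h t hh hat htb
    have hnb : ∀ k : ℕ, k ≤ n → ∀ u ∈ Set.Icc (0:ℝ) h, t + (k:ℝ)*h + u ∈ Set.Ioo a b := by
      intro k hk u hu
      have hk' : (k:ℝ) ≤ n := by exact_mod_cast hk
      have hk0 : (0:ℝ) ≤ (k:ℝ) := Nat.cast_nonneg k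
      push_cast at htb
      constructor
      · nlinarith [hu.1, hu.2]
      · nlinarith [hu.1, hu.2]
    have hdiffAt : ∀ x ∈ Set.Ioo a b, DifferentiableAt ℝ Φ x := fun x hx =>
      (hs.differentiableOn (by simp)).differentiableAt (isOpen_Ioo.mem_nhds hx)
    have hΦ' : ContDiffOn ℝ (⊤ : ℕ∞) (deriv Φ) (Set.Ioo a b) :=
      hs.deriv_of_isOpen isOpen_Ioo (by simp)
    have hcont' : ContinuousOn (deriv Φ) (Set.Ioo a b) := hΦ'.continuousOn
    have hdm : ∀ m : ℕ, ∀ x ∈ Set.Ioo a b, 0 ≤ iteratedDeriv m (deriv Φ) x := by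
      intro m x hx
      rw [← iteratedDeriv_succ']
      exact hd (m+1) x hx
    -- each shifted derivative is continuous, hence interval integrable
    have hcontk : ∀ k : ℕ, k ≤ n → ContinuousOn (fun u => deriv Φ (t + (k:ℝ)*h + u)) (Set.Icc 0 h) := by
      intro k hk
      exact hcont'.comp ((continuous_const.add continuous_id).continuousOn)
        (fun u hu => hnb k hk u hu)
    have hint : ∀ k ∈ Finset.range (n+1),
        IntervalIntegrable (fun u => (-1:ℝ)^(n-k) * (n.choose k : ℝ) * deriv Φ (t + (k:ℝ)*h + u))
          MeasureTheory.volume 0 h := by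
      intro k hk
      have hk' := Nat.lt_succ_iff.mp (Finset.mem_range.mp hk)
      have := ((hcontk k hk').const_smul ((-1:ℝ)^(n-k) * (n.choose k : ℝ)))
      have := this.intervalIntegrable_of_Icc (μ := MeasureTheory.volume) hh.le
      simpa [Pi.smul_def, smul_eq_mul] using this
    have key : ∀ k ∈ Finset.range (n+1),
        (∫ u in (0:ℝ)..h, deriv Φ (t + (k:ℝ)*h + u)) = Φ (t + ((k:ℝ)+1)*h) - Φ (t + (k:ℝ)*h) := by
      intro k hk
      have hk' := Nat.lt_succ_iff.mp (Finset.mem_range.mp hk)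
      have hsub : Set.uIcc (t + (k:ℝ)*h) (t + (k:ℝ)*h + h) ⊆ Set.Ioo a b := by
        rw [Set.uIcc_of_le (by linarith)]
        intro x hx
        have := hnb k hk' (x - (t + (k:ℝ)*h)) ⟨by linarith [hx.1], by linarith [hx.2]⟩
        simpa using this
      rw [intervalIntegral.integral_comp_add_left (deriv Φ) (t + (k:ℝ)*h)]
      rw [show t + (k:ℝ)*h + 0 = t + (k:ℝ)*h by ring]
      rw [integral_deriv_eq_sub (fun x hx => hdiffAt x (hsub hx))
        ((hcont'.mono hsub).intervalIntegrable)]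
      ring_nf
    have step1 : 0 ≤ ∫ u in (0:ℝ)..h, ∑ k ∈ Finset.range (n+1),
        (-1:ℝ)^(n-k) * (n.choose k : ℝ) * deriv Φ (t + (k:ℝ)*h + u) := by
      apply intervalIntegral.integral_nonneg hh.le
      intro u hu
      have h1 : a < t + u := by linarith [hu.1]
      have h2 : (t + u) + (n:ℝ)*h < b := by push_cast at htb; linarith [hu.2]
      have := ih (deriv Φ) hΦ' hdm h (t+u) hh h1 h2
      have heq : ∑ k ∈ Finset.range (n+1), (-1:ℝ)^(n-k) * (n.choose k : ℝ) * deriv Φ (t + (k:ℝ)*h + u)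
          = ∑ k ∈ Finset.range (n+1), (-1:ℝ)^(n-k) * (n.choose k : ℝ) * deriv Φ ((t+u) + (k:ℝ)*h) := by
        refine Finset.sum_congr rfl fun k _ => ?_
        congr 1
        ring_nf
      rw [heq]
      exact this
    rw [intervalIntegral.integral_finset_sum hint] at step1
    have step2 : ∀ k ∈ Finset.range (n+1),
        (∫ u in (0:ℝ)..h, (-1:ℝ)^(n-k) * (n.choose k : ℝ) * deriv Φ (t + (k:ℝ)*h + u))
          = (-1:ℝ)^(n-k) * (n.choose k : ℝ) * (Φ (t + ((k:ℝ)+1)*h) - Φ (t + (k:ℝ)*h)) := by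
      intro k hk
      rw [intervalIntegral.integral_const_mul, key k hk]
    rw [Finset.sum_congr rfl step2] at step1
    have final := diff_sum_aux n (fun k => Φ (t + (k:ℝ)*h))
    calc (0:ℝ) ≤ ∑ k ∈ Finset.range (n+1),
          (-1:ℝ)^(n-k) * (n.choose k : ℝ) * (Φ (t + ((k:ℝ)+1)*h) - Φ (t + (k:ℝ)*h)) := step1
      _ = ∑ k ∈ Finset.range (n + 2), (-1:ℝ)^(n+1-k) * (((n+1).choose k : ℕ) : ℝ) * Φ (t + (k:ℝ)*h) := by
          rw [final]
          refine Finset.sum_congr rfl fun k _ => ?_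
          push_cast
          ring_nf

/-- Bernstein: if all derivatives of a smooth function `Φ` are nonnegative on
`(a,b)`, then all forward finite differences of `Φ` are nonnegative there. -/
theorem stmt_14 (a b : ℝ) (Φ : ℝ → ℝ) (hsmooth : ContDiffOn ℝ (⊤ : ℕ∞) Φ (Set.Ioo a b))
    (hder : ∀ n : ℕ, ∀ t ∈ Set.Ioo a b, 0 ≤ iteratedDeriv n Φ t) :
    ∀ n : ℕ, ∀ h t : ℝ, 0 < h → a < t → t + (n : ℝ) * h < b →
      0 ≤ ∑ k ∈ Finset.range (n + 1),
        (-1 : ℝ) ^ (n - k) * (n.choose k : ℝ) * Φ (t + (k : ℝ) * h) := by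
  intro n h t hh hat htb
  exact bern a b n Φ hsmooth hder h t hh hat htb
end
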